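/- Let a : ℝ → ℝ be smooth and everywhere positive, set H := ȧ/a, and assume H(t) ≠ 0 and Ḣ(t) ≠ 0 for all t. Let Φ, Ψ, ψ : ℝ × ℝ³ → ℝ be smooth and let A : ℝ → ℝ be smooth, and suppose that for all (t, x) ∈ ℝ × ℝ³: (i) H(t)Φ(t,x) + ∂_tΨ(t,x) = A(t); (ii) (3H(t)² + Ḣ(t))Φ(t,x) + 3H(t)∂_tΨ(t,x) − (Δ_xΨ)(t,x)/a(t)² + (H(t)/a(t))(Δ_xψ)(t,x) = 0; (iii) Ḣ(t)∂_tΦ(t,x) + (Ḧ(t) + 6H(t)Ḣ(t))Φ(t,x) + Ḣ(t)(3∂_tΨ(t,x) + (Δ_xψ)(t,x)/a(t)) = 0. Then Ψ satisfies the Mukhanov–Sasaki-type equation: for all (t,x), (∂_t²Ψ(t,x) − Ȧ(t)) + (Ḧ(t)/Ḣ(t) − 2Ḣ(t)/H(t) + 3H(t))(∂_tΨ(t,x) − A(t)) − (Δ_xΨ)(t,x)/a(t)² = 0. (This is the paper's derivation in Section 6.1 of the two copies of the Mukhanov–Sasaki equation for single-field inflation; A ≡ 0 gives the standard equation for the t-part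 Ψᵗ, while general A(t) gives the equation for the harmonic part Ψʰ.) -/

import Mathlib

/-!
STATEMENT 11: Derivation of the Mukhanov–Sasaki-type equation (Section 6.1 of
the paper): the constraint equations (i)–(iii) of single-field inflation imply
(∂_t²Ψ − Ȧ) + (Ḧ/Ḣ − 2Ḣ/H + 3H)(∂_tΨ − A) − ΔΨ/a² = 0.
-/

noncomputable section

/-- Euclidean 3-space for the spatial slices. -/
abbrev E3 := EuclideanSpace ℝ (Fin 3)

/-- The i-th spatial partial derivative of a function on ℝ³. -/
def pd (i : Fin 3) (f : E3 → ℝ) : E3 → ℝ :=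
  fun x => fderiv ℝ f x (EuclideanSpace.single i 1)

/-- Time derivative ∂_t of a function of (t, x). -/
def dt (Φ : ℝ × E3 → ℝ) (t : ℝ) (x : E3) : ℝ :=
  deriv (fun s => Φ (s, x)) t

/-- Second time derivative ∂_t² of a function of (t, x). -/
def dt2 (Φ : ℝ × E3 → ℝ) (t : ℝ) (x : E3) : ℝ :=
  deriv (fun s => deriv (fun r => Φ (r, x)) s) t

/-- Spatial Laplacian Δ_x of a function of (t, x), at fixed time t. -/
def lapx (Φ : ℝ × E3 → ℝ) (t : ℝ) (x : E3) : ℝ :=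
  ∑ i, pd i (pd i (fun y => Φ (t, y))) x

/-- Purely algebraic core of the Mukhanov–Sasaki derivation. -/
lemma ms_algebra (h h' h'' φ φ' p p'' q m A0 A1 : ℝ)
    (hh : h ≠ 0) (hh' : h' ≠ 0)
    (e1 : h * φ + p = A0)
    (e1' : h' * φ + h * φ' + p'' = A1)
    (e2 : (3 * h ^ 2 + h') * φ + 3 * h * p - q + h * m = 0)
    (e3 : h' * φ' + (h'' + 6 * h * h') * φ + h' * (3 * p + m) = 0) :
    (p'' - A1) + (h'' / h' - 2 * h' / h + 3 * h) * (p - A0) - q = 0 := by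
  have key : (p'' - A1) * (h * h')
      + (h * h'' - 2 * h' ^ 2 + 3 * h ^ 2 * h') * (p - A0) - q * (h * h') = 0 := by
    linear_combination (-(h ^ 2)) * e3 + (h * h') * e2 + (h * h') * e1'
      + (h * h'' + 3 * h ^ 2 * h' - 2 * h' ^ 2) * e1
  have hne : h * h' ≠ 0 := mul_ne_zero hh hh'
  have hq : (p'' - A1) + (h'' / h' - 2 * h' / h + 3 * h) * (p - A0) - q
      = ((p'' - A1) * (h * h')
        + (h * h'' - 2 * h' ^ 2 + 3 * h ^ 2 * h') * (p - A0) - q * (h * h')) / (h * h') := by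
    field_simp
  rw [hq, key, zero_div]

theorem mukhanov_sasaki_type_equation
    (a : ℝ → ℝ) (ha : ContDiff ℝ (⊤ : ℕ∞) a) (ha_pos : ∀ t, 0 < a t)
    (H : ℝ → ℝ) (hH_def : H = fun t => deriv a t / a t)
    (hH_ne : ∀ t, H t ≠ 0) (hH'_ne : ∀ t, deriv H t ≠ 0)
    (Φ Ψ ψ : ℝ × E3 → ℝ) (A : ℝ → ℝ)
    (hΦ : ContDiff ℝ (⊤ : ℕ∞) Φ) (hΨ : ContDiff ℝ (⊤ : ℕ∞) Ψ) (hψ : ContDiff ℝ (⊤ : ℕ∞) ψ)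
    (hA : ContDiff ℝ (⊤ : ℕ∞) A)
    -- (i)  HΦ + Ψ̇ = A(t)
    (h1 : ∀ t x, H t * Φ (t, x) + dt Ψ t x = A t)
    -- (ii)  (3H² + Ḣ)Φ + 3HΨ̇ − ΔΨ/a² + (H/a)Δψ = 0
    (h2 : ∀ t x, (3 * (H t) ^ 2 + deriv H t) * Φ (t, x)
      + 3 * H t * dt Ψ t x - lapx Ψ t x / (a t) ^ 2
      + (H t / a t) * lapx ψ t x = 0)
    -- (iii)  ḢΦ̇ + (Ḧ + 6HḢ)Φ + Ḣ(3Ψ̇ + Δψ/a) = 0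
    (h3 : ∀ t x, deriv H t * dt Φ t x
      + (deriv (deriv H) t + 6 * H t * deriv H t) * Φ (t, x)
      + deriv H t * (3 * dt Ψ t x + lapx ψ t x / a t) = 0) :
    -- the Mukhanov–Sasaki-type equation
    ∀ t x, (dt2 Ψ t x - deriv A t)
      + (deriv (deriv H) t / deriv H t - 2 * deriv H t / H t + 3 * H t)
        * (dt Ψ t x - A t)
      - lapx Ψ t x / (a t) ^ 2 = 0 := by
  intro t x
  have ha' : ContDiff ℝ (⊤ : ℕ∞) a := ha.of_le (by simp)
  have hHs : ContDiff ℝ (⊤ : ℕ∞) H := by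
    rw [hH_def]
    exact ((contDiff_infty_iff_deriv.mp ha').2).div ha' (fun t => (ha_pos t).ne')
  have hΦx : ContDiff ℝ (⊤ : ℕ∞) (fun s : ℝ => Φ (s, x)) :=
    (hΦ.of_le (by simp)).comp (contDiff_id.prodMk contDiff_const)
  have hΨx : ContDiff ℝ (⊤ : ℕ∞) (fun s : ℝ => Ψ (s, x)) :=
    (hΨ.of_le (by simp)).comp (contDiff_id.prodMk contDiff_const)
  -- differentiated constraint (i)
  have e1' : deriv H t * Φ (t, x) + H t * dt Φ t x + dt2 Ψ t x = deriv A t := by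
    have heq : (fun s => H s * Φ (s, x) + dt Ψ s x) = A :=
      funext fun s => h1 s x
    have hH' : HasDerivAt H (deriv H t) t :=
      (hHs.differentiable (by simp) t).hasDerivAt
    have hf : HasDerivAt (fun s => Φ (s, x)) (dt Φ t x) t :=
      (hΦx.differentiable (by simp) t).hasDerivAt
    have hgd : ContDiff ℝ (⊤ : ℕ∞) (deriv fun r : ℝ => Ψ (r, x)) :=
      (contDiff_infty_iff_deriv.mp hΨx).2
    have hg' : HasDerivAt (fun s => dt Ψ s x) (dt2 Ψ t x) t :=
      (hgd.differentiable (by simp) t).hasDerivAt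
    have hsum : HasDerivAt (fun s => H s * Φ (s, x) + dt Ψ s x)
        (deriv H t * Φ (t, x) + H t * dt Φ t x + dt2 Ψ t x) t :=
      (hH'.mul hf).add hg'
    have hd := hsum.deriv
    rw [heq] at hd
    linarith [hd]
  have e2 : (3 * (H t) ^ 2 + deriv H t) * Φ (t, x) + 3 * H t * dt Ψ t x
      - lapx Ψ t x / (a t) ^ 2 + H t * (lapx ψ t x / a t) = 0 := by
    linear_combination h2 t x
  exact ms_algebra (H t) (deriv H t) (deriv (deriv H) t) (Φ (t, x)) (dt Φ t x)
    (dt Ψ t x) (dt2 Ψ t x) (lapx Ψ t x / (a t) ^ 2) (lapx ψ t x / a t)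
    (A t) (deriv A t) (hH_ne t) (hH'_ne t) (h1 t x) e1' e2 (h3 t x)

end
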